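/- Let A, B ⊂ {1,…,N} be disjoint with |A∪B| = k ≤ N−2 and fix σ_A ∈ {−1,1}^A. Then (1 − ‖(Λ^{[A,B]})^{1/2} M^{[A,B]} (Λ^{[A,B]})^{1/2}‖/(N−k)) · a_{[A,B]} ≤ a_{N−k−1}. -/

import Mathlib

open Finset MeasureTheory ProbabilityTheory

noncomputable section SpinGlassDefs

/-- The real spin value `±1` attached to a Boolean spin. -/
def spinVal (b : Bool) : ℝ := if b then 1 else -1

/-- Flip the `i`-th coordinate of a spin configuration. -/
def flipAt {N : ℕ} (i : Fin N) (σ : Fin N → Bool) : Fin N → Bool :=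
  Function.update σ i (!σ i)

/-- Discrete partial derivative `(∂_i f)(σ) = (f(σ) - f(σ̂_i))/2`. -/
def dd {N : ℕ} (i : Fin N) (f : (Fin N → Bool) → ℝ) (σ : Fin N → Bool) : ℝ :=
  (f σ - f (flipAt i σ)) / 2

/-- The configuration agreeing with `σA` on `A` and with `σ` elsewhere. -/
def comb {N : ℕ} (A : Finset (Fin N)) (σA σ : Fin N → Bool) : Fin N → Bool :=
  fun i => if i ∈ A then σA i else σ i

/-- `f` depends only on the coordinates in `S`. -/
def dependsOn {N : ℕ} (f : (Fin N → Bool) → ℝ) (S : Finset (Fin N)) : Prop :=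
  ∀ σ τ : Fin N → Bool, (∀ i ∈ S, σ i = τ i) → f σ = f τ

/-- The `p`-spin interaction term of the reduced Hamiltonian `H_N^{[A,B]}`:
all indices range over `Bᶜ`, spins on `A` are frozen to `σA`. -/
def hamTerm (N : ℕ) (g : (p : ℕ) → (Fin p → Fin N) → ℝ) (βp : ℕ → ℝ)
    (A B : Finset (Fin N)) (σA σ : Fin N → Bool) (p : ℕ) : ℝ :=
  if 2 ≤ p then
    (βp p / (N : ℝ) ^ (((p : ℝ) - 1) / 2)) *
      ∑ t : Fin p → Fin N,
        (if ∀ l, t l ∉ B then g p t * ∏ l, spinVal (comb A σA σ (t l)) else 0)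
  else 0

/-- The reduced Hamiltonian `H_N^{[A,B]}` (with boundary condition `σA` on `A`,
the spins of `B` removed); `H_N` itself is the case `A = B = ∅`. -/
def ham (N : ℕ) (g : (p : ℕ) → (Fin p → Fin N) → ℝ) (βp : ℕ → ℝ) (η : Fin N → ℝ)
    (A B : Finset (Fin N)) (σA σ : Fin N → Bool) : ℝ :=
  (∑' p : ℕ, hamTerm N g βp A B σA σ p) + ∑ i ∈ Bᶜ, η i * spinVal (comb A σA σ i)

/-- Absolute convergence of all the (reduced) Hamiltonians. -/
def HamSummable (N : ℕ) (g : (p : ℕ) → (Fin p → Fin N) → ℝ) (βp : ℕ → ℝ) : Prop :=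
  ∀ (A B : Finset (Fin N)) (σA σ : Fin N → Bool),
    Summable fun p : ℕ => |hamTerm N g βp A B σA σ p|

/-- Gibbs expectation `⟨f⟩_{[A,B]}` of the reduced system.  (The sum runs over full
configurations; since the integrands under consideration depend only on the coordinates
outside `A ∪ B`, the redundant multiplicity cancels between numerator and denominator.) -/
def gibbs (N : ℕ) (g : (p : ℕ) → (Fin p → Fin N) → ℝ) (βp : ℕ → ℝ) (η : Fin N → ℝ)
    (A B : Finset (Fin N)) (σA : Fin N → Bool) (f : (Fin N → Bool) → ℝ) : ℝ :=
  (∑ σ : Fin N → Bool, f σ * Real.exp (ham N g βp η A B σA σ)) /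
    ∑ σ : Fin N → Bool, Real.exp (ham N g βp η A B σA σ)

/-- Gibbs covariance `⟨f;h⟩_{[A,B]}`. -/
def gcov (N : ℕ) (g : (p : ℕ) → (Fin p → Fin N) → ℝ) (βp : ℕ → ℝ) (η : Fin N → ℝ)
    (A B : Finset (Fin N)) (σA : Fin N → Bool) (f h : (Fin N → Bool) → ℝ) : ℝ :=
  gibbs N g βp η A B σA (fun σ => f σ * h σ) -
    gibbs N g βp η A B σA f * gibbs N g βp η A B σA h

/-- The cavity field `B_j^{[A,B]} = σ_j ∂_j H_N^{[A,B]}`. -/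
def cavity (N : ℕ) (g : (p : ℕ) → (Fin p → Fin N) → ℝ) (βp : ℕ → ℝ) (η : Fin N → ℝ)
    (A B : Finset (Fin N)) (σA : Fin N → Bool) (j : Fin N) (σ : Fin N → Bool) : ℝ :=
  spinVal (σ j) * dd j (ham N g βp η A B σA) σ

/-- The weighted Dirichlet form `D_{[A,B]}(f)`. -/
def Dform (N : ℕ) (g : (p : ℕ) → (Fin p → Fin N) → ℝ) (βp : ℕ → ℝ) (η : Fin N → ℝ)
    (A B : Finset (Fin N)) (σA : Fin N → Bool) (f : (Fin N → Bool) → ℝ) : ℝ :=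
  ∑ j ∈ (A ∪ B)ᶜ, gibbs N g βp η A B σA
    (fun σ => (Real.cosh (cavity N g βp η A B σA j σ))⁻¹ ^ 2 * dd j f σ ^ 2)

/-- The inverse spectral gap `a_{[A,B]}`: supremum of `⟨f;f⟩_{[A,B]}/D_{[A,B]}(f)` over
nonconstant functions of the free spins. -/
def gap (N : ℕ) (g : (p : ℕ) → (Fin p → Fin N) → ℝ) (βp : ℕ → ℝ) (η : Fin N → ℝ)
    (A B : Finset (Fin N)) (σA : Fin N → Bool) : ℝ :=
  sSup {r : ℝ | ∃ f : (Fin N → Bool) → ℝ, dependsOn f ((A ∪ B)ᶜ) ∧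
    (∃ σ τ : Fin N → Bool, f σ ≠ f τ) ∧
    r = gcov N g βp η A B σA f f / Dform N g βp η A B σA f}

/-- `aSub k` is the maximal inverse spectral gap `a_{N-k}` over all subsystems with
`|A ∪ B| = k` and all boundary conditions `σA`. -/
def aSub (N : ℕ) (g : (p : ℕ) → (Fin p → Fin N) → ℝ) (βp : ℕ → ℝ) (η : Fin N → ℝ)
    (k : ℕ) : ℝ :=
  sSup {r : ℝ | ∃ (A B : Finset (Fin N)) (σA : Fin N → Bool),
    Disjoint A B ∧ (A ∪ B).card = k ∧ r = gap N g βp η A B σA}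

/-- Magnetization `m_j^{[A,B]} = ⟨σ_j⟩_{[A,B]}`. -/
def mag (N : ℕ) (g : (p : ℕ) → (Fin p → Fin N) → ℝ) (βp : ℕ → ℝ) (η : Fin N → ℝ)
    (A B : Finset (Fin N)) (σA : Fin N → Bool) (j : Fin N) : ℝ :=
  gibbs N g βp η A B σA (fun σ => spinVal (σ j))

/-- `β := Σ_{p ≥ 2} √(p³ log p) β_p`. -/
def betaTot (βp : ℕ → ℝ) : ℝ :=
  ∑' p : ℕ, if 2 ≤ p then Real.sqrt ((p : ℝ) ^ 3 * Real.log p) * βp p else 0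

/-- `C_β = (10³ β)² exp(10³ β)`. -/
def Cbeta (β : ℝ) : ℝ := (10 ^ 3 * β) ^ 2 * Real.exp (10 ^ 3 * β)

/-- The ℓ² → ℓ² operator norm of a real matrix. -/
def opNorm {n : Type} [Fintype n] [DecidableEq n] (M : Matrix n n ℝ) : ℝ :=
  ‖Matrix.toEuclideanCLM (𝕜 := ℝ) M‖

/-- The matrix `(∂_i B_j^{[A,B]}(σ))_{i,j ∉ A∪B}`. -/
def cavMatrix (N : ℕ) (g : (p : ℕ) → (Fin p → Fin N) → ℝ) (βp : ℕ → ℝ) (η : Fin N → ℝ)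
    (A B : Finset (Fin N)) (σA σ : Fin N → Bool) :
    Matrix {i : Fin N // i ∈ (A ∪ B)ᶜ} {i : Fin N // i ∈ (A ∪ B)ᶜ} ℝ :=
  Matrix.of fun i j => dd i.1 (cavity N g βp η A B σA j.1) σ

/-- The event/condition `Ω`: all the matrices `(∂_i B_j^{[A,B]})` have operator norm `≤ 5β`. -/
def OmegaCond (N : ℕ) (g : (p : ℕ) → (Fin p → Fin N) → ℝ) (βp : ℕ → ℝ) (η : Fin N → ℝ) : Prop :=
  ∀ (A B : Finset (Fin N)), Disjoint A B → ∀ (σA σ : Fin N → Bool),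
    opNorm (cavMatrix N g βp η A B σA σ) ≤ 5 * betaTot βp

/-- The diagonal matrix `(Λ^{[A,B]})^{1/2} = diag((1-(m_i^{[A,B]})²)^{-1/2})`. -/
def lambdaHalf (N : ℕ) (g : (p : ℕ) → (Fin p → Fin N) → ℝ) (βp : ℕ → ℝ) (η : Fin N → ℝ)
    (A B : Finset (Fin N)) (σA : Fin N → Bool) :
    Matrix {i : Fin N // i ∈ (A ∪ B)ᶜ} {i : Fin N // i ∈ (A ∪ B)ᶜ} ℝ :=
  Matrix.diagonal fun i => Real.sqrt (1 - mag N g βp η A B σA i.1 ^ 2)⁻¹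

/-- The correlation matrix `M^{[A,B]} = (⟨σ_i;σ_j⟩_{[A,B]})_{i,j ∉ A∪B}`. -/
def corrM (N : ℕ) (g : (p : ℕ) → (Fin p → Fin N) → ℝ) (βp : ℕ → ℝ) (η : Fin N → ℝ)
    (A B : Finset (Fin N)) (σA : Fin N → Bool) :
    Matrix {i : Fin N // i ∈ (A ∪ B)ᶜ} {i : Fin N // i ∈ (A ∪ B)ᶜ} ℝ :=
  Matrix.of fun i j =>
    gcov N g βp η A B σA (fun σ => spinVal (σ i.1)) (fun σ => spinVal (σ j.1))

/-- The conjugated correlation matrix `(Λ^{[A,B]})^{1/2} M^{[A,B]} (Λ^{[A,B]})^{1/2}`. -/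
def conjCorr (N : ℕ) (g : (p : ℕ) → (Fin p → Fin N) → ℝ) (βp : ℕ → ℝ) (η : Fin N → ℝ)
    (A B : Finset (Fin N)) (σA : Fin N → Bool) :
    Matrix {i : Fin N // i ∈ (A ∪ B)ᶜ} {i : Fin N // i ∈ (A ∪ B)ᶜ} ℝ :=
  lambdaHalf N g βp η A B σA * corrM N g βp η A B σA * lambdaHalf N g βp η A B σA

/-- `h_j^{[A,B]} = (σ_j - m_j^{[A,B]}) - e^{-2σ_j B_j^{[A,B]}}(σ_j + m_j^{[A,B]})`. -/
def hfun (N : ℕ) (g : (p : ℕ) → (Fin p → Fin N) → ℝ) (βp : ℕ → ℝ) (η : Fin N → ℝ)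
    (A B : Finset (Fin N)) (σA : Fin N → Bool) (j : Fin N) (σ : Fin N → Bool) : ℝ :=
  (spinVal (σ j) - mag N g βp η A B σA j) -
    Real.exp (-2 * spinVal (σ j) * cavity N g βp η A B σA j σ) *
      (spinVal (σ j) + mag N g βp η A B σA j)

/-- The matrix `S^{[A,B]}`. -/
def Smatrix (N : ℕ) (g : (p : ℕ) → (Fin p → Fin N) → ℝ) (βp : ℕ → ℝ) (η : Fin N → ℝ)
    (A B : Finset (Fin N)) (σA : Fin N → Bool) :
    Matrix {i : Fin N // i ∈ (A ∪ B)ᶜ} {i : Fin N // i ∈ (A ∪ B)ᶜ} ℝ :=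
  Matrix.of fun i j =>
    gcov N g βp η A B σA (hfun N g βp η A B σA i.1) (hfun N g βp η A B σA j.1) /
      (Real.sqrt (1 - mag N g βp η A B σA i.1 ^ 2) *
        Real.sqrt (1 - mag N g βp η A B σA j.1 ^ 2))

/-- The couplings `g` form an i.i.d. family of standard Gaussian random variables
(indexed by all tuples of pairwise distinct indices, for all `p ≥ 2`), and vanish on
tuples with coinciding indices. -/
def IsIIDGaussianCouplings {Ω' : Type} [MeasurableSpace Ω'] (P : Measure Ω') (N : ℕ)
    (g : Ω' → (p : ℕ) → (Fin p → Fin N) → ℝ) : Prop :=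
  (∀ (p : ℕ) (t : Fin p → Fin N), Measurable fun ω => g ω p t) ∧
  (∀ ω (p : ℕ) (t : Fin p → Fin N), ¬ Function.Injective t → g ω p t = 0) ∧
  (∀ (p : ℕ) (t : Fin p → Fin N), 2 ≤ p → Function.Injective t →
    Measure.map (fun ω => g ω p t) P = gaussianReal 0 1) ∧
  iIndepFun
    (fun (i : {pt : (p : ℕ) × (Fin p → Fin N) // 2 ≤ pt.1 ∧ Function.Injective pt.2}) ω =>
      g ω i.1.1 i.1.2) P

end SpinGlassDefs

section Part1

open Finset

variable {N : ℕ}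

lemma flipAt_apply_self (j : Fin N) (σ : Fin N → Bool) : flipAt j σ j = !σ j := by
  simp [flipAt]

lemma flipAt_apply_ne (j i : Fin N) (σ : Fin N → Bool) (h : i ≠ j) : flipAt j σ i = σ i := by
  simp [flipAt, Function.update_of_ne h]

lemma flipAt_involutive (j : Fin N) : Function.Involutive (flipAt j) := by
  intro σ; funext i
  by_cases h : i = j
  · subst h; simp [flipAt]
  · simp [flipAt_apply_ne _ _ _ h]

lemma sum_flipAt (j : Fin N) (F : (Fin N → Bool) → ℝ) :
    ∑ σ : Fin N → Bool, F (flipAt j σ) = ∑ σ : Fin N → Bool, F σ :=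
  Equiv.sum_comp ((flipAt_involutive j).toPerm _) F

lemma update_eq_self_of_eq (j : Fin N) (b : Bool) (σ : Fin N → Bool) (h : σ j = b) :
    Function.update σ j b = σ := by
  funext i; by_cases hi : i = j
  · subst hi; simp [h]
  · simp [Function.update_of_ne hi]

lemma update_eq_flip_of_ne (j : Fin N) (b : Bool) (σ : Fin N → Bool) (h : σ j ≠ b) :
    Function.update σ j b = flipAt j σ := by
  funext i; by_cases hi : i = j
  · subst hi; simp [flipAt]; cases hb : σ i <;> cases b <;> simp_all
  · simp [Function.update_of_ne hi, flipAt_apply_ne _ _ _ hi]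

/-- The fundamental 2-to-1 sum identity. -/
lemma sum_update_eq (j : Fin N) (b : Bool) (F : (Fin N → Bool) → ℝ) :
    ∑ σ : Fin N → Bool, F (Function.update σ j b)
      = 2 * ∑ σ : Fin N → Bool, (if σ j = b then F σ else 0) := by
  have h1 : ∀ σ : Fin N → Bool, F (Function.update σ j b)
      = (if σ j = b then F σ else 0) + (if σ j = b then 0 else F (flipAt j σ)) := by
    intro σ
    by_cases h : σ j = b
    · rw [update_eq_self_of_eq j b σ h]; simp [h]
    · rw [update_eq_flip_of_ne j b σ h]; simp [h]
  calc ∑ σ : Fin N → Bool, F (Function.update σ j b)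
      = ∑ σ : Fin N → Bool, ((if σ j = b then F σ else 0)
          + (if σ j = b then 0 else F (flipAt j σ))) := by
        exact Finset.sum_congr rfl (fun σ _ => h1 σ)
    _ = (∑ σ : Fin N → Bool, (if σ j = b then F σ else 0))
          + ∑ σ : Fin N → Bool, (if σ j = b then 0 else F (flipAt j σ)) := by
        rw [Finset.sum_add_distrib]
    _ = 2 * ∑ σ : Fin N → Bool, (if σ j = b then F σ else 0) := by
        have h2 : ∑ σ : Fin N → Bool, (if σ j = b then 0 else F (flipAt j σ))
            = ∑ σ : Fin N → Bool, (if σ j = b then F σ else 0) := by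
          rw [← sum_flipAt j (fun σ => if σ j = b then F σ else 0)]
          refine Finset.sum_congr rfl (fun σ _ => ?_)
          rw [flipAt_apply_self]
          rcases hb : σ j <;> rcases b <;> simp [hb, flipAt_involutive j σ]
        rw [h2]; ring

end Part1
section Part2

open Finset

variable {N : ℕ}

lemma ham_congr (g : (p : ℕ) → (Fin p → Fin N) → ℝ) (βp : ℕ → ℝ) (η : Fin N → ℝ)
    (A A' B : Finset (Fin N)) (σA σA' σ σ' : Fin N → Bool)
    (h : comb A σA σ = comb A' σA' σ') :
    ham N g βp η A B σA σ = ham N g βp η A' B σA' σ' := by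
  unfold ham hamTerm
  rw [h]

lemma comb_insert_update (A : Finset (Fin N)) (j : Fin N) (hj : j ∉ A)
    (σA σ : Fin N → Bool) (b : Bool) :
    comb (insert j A) (Function.update σA j b) σ = comb A σA (Function.update σ j b) := by
  funext i
  by_cases hij : i = j
  · subst hij
    simp [comb, hj]
  · by_cases hiA : i ∈ A
    · simp [comb, hiA, Function.update_of_ne hij, Finset.mem_insert, hij]
    · simp [comb, hiA, Function.update_of_ne hij, Finset.mem_insert, hij]

lemma ham_insert (g : (p : ℕ) → (Fin p → Fin N) → ℝ) (βp : ℕ → ℝ) (η : Fin N → ℝ)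
    (A B : Finset (Fin N)) (j : Fin N) (hj : j ∉ A) (σA σ : Fin N → Bool) (b : Bool) :
    ham N g βp η (insert j A) B (Function.update σA j b) σ
      = ham N g βp η A B σA (Function.update σ j b) :=
  ham_congr g βp η _ _ B _ _ _ _ (comb_insert_update A j hj σA σ b)

end Part2

noncomputable section GibbsBasics

open Finset

variable {N : ℕ}

/-- The Gibbs weight. -/
def Wt (N : ℕ) (g : (p : ℕ) → (Fin p → Fin N) → ℝ) (βp : ℕ → ℝ) (η : Fin N → ℝ)
    (A B : Finset (Fin N)) (σA : Fin N → Bool) (σ : Fin N → Bool) : ℝ :=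
  Real.exp (ham N g βp η A B σA σ)

/-- The unnormalized expectation. -/
def Ex (N : ℕ) (g : (p : ℕ) → (Fin p → Fin N) → ℝ) (βp : ℕ → ℝ) (η : Fin N → ℝ)
    (A B : Finset (Fin N)) (σA : Fin N → Bool) (f : (Fin N → Bool) → ℝ) : ℝ :=
  ∑ σ : Fin N → Bool, f σ * Wt N g βp η A B σA σ

/-- The partition function. -/
def Zs (N : ℕ) (g : (p : ℕ) → (Fin p → Fin N) → ℝ) (βp : ℕ → ℝ) (η : Fin N → ℝ)
    (A B : Finset (Fin N)) (σA : Fin N → Bool) : ℝ :=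
  ∑ σ : Fin N → Bool, Wt N g βp η A B σA σ

variable (g : (p : ℕ) → (Fin p → Fin N) → ℝ) (βp : ℕ → ℝ) (η : Fin N → ℝ)
variable (A B : Finset (Fin N)) (σA : Fin N → Bool)

lemma Wt_pos (σ : Fin N → Bool) : 0 < Wt N g βp η A B σA σ := Real.exp_pos _

lemma Zs_pos : 0 < Zs N g βp η A B σA :=
  Finset.sum_pos (fun σ _ => Wt_pos g βp η A B σA σ) ⟨fun _ => true, Finset.mem_univ _⟩

lemma gibbs_eq (f : (Fin N → Bool) → ℝ) :
    gibbs N g βp η A B σA f = Ex N g βp η A B σA f / Zs N g βp η A B σA := rfl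

lemma gibbs_nonneg (f : (Fin N → Bool) → ℝ) (hf : ∀ σ, 0 ≤ f σ) :
    0 ≤ gibbs N g βp η A B σA f :=
  div_nonneg (Finset.sum_nonneg fun σ _ => mul_nonneg (hf σ) (Wt_pos g βp η A B σA σ).le)
    (Zs_pos g βp η A B σA).le

lemma gibbs_le (f h : (Fin N → Bool) → ℝ) (hfh : ∀ σ, f σ ≤ h σ) :
    gibbs N g βp η A B σA f ≤ gibbs N g βp η A B σA h := by
  rw [gibbs_eq, gibbs_eq]
  refine (div_le_div_iff_of_pos_right (Zs_pos g βp η A B σA)).mpr ?_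
  exact Finset.sum_le_sum fun σ _ => mul_le_mul_of_nonneg_right (hfh σ) (Wt_pos g βp η A B σA σ).le


lemma gibbs_const (c : ℝ) : gibbs N g βp η A B σA (fun _ => c) = c := by
  rw [gibbs_eq]
  unfold Ex
  rw [← Finset.mul_sum, mul_div_assoc]
  show c * (Zs N g βp η A B σA / Zs N g βp η A B σA) = c
  rw [div_self (Zs_pos g βp η A B σA).ne']
  exact mul_one c

end GibbsBasics
noncomputable section GcovBasics

open Finset

variable {N : ℕ}
variable (g : (p : ℕ) → (Fin p → Fin N) → ℝ) (βp : ℕ → ℝ) (η : Fin N → ℝ)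
variable (A B : Finset (Fin N)) (σA : Fin N → Bool)

lemma gibbs_add (f h : (Fin N → Bool) → ℝ) :
    gibbs N g βp η A B σA (fun σ => f σ + h σ)
      = gibbs N g βp η A B σA f + gibbs N g βp η A B σA h := by
  rw [gibbs_eq, gibbs_eq, gibbs_eq, ← add_div]
  congr 1
  unfold Ex
  rw [← Finset.sum_add_distrib]
  exact Finset.sum_congr rfl fun σ _ => by ring

lemma gibbs_smul (c : ℝ) (f : (Fin N → Bool) → ℝ) :
    gibbs N g βp η A B σA (fun σ => c * f σ) = c * gibbs N g βp η A B σA f := by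
  rw [gibbs_eq, gibbs_eq, ← mul_div_assoc]
  congr 1
  unfold Ex
  rw [Finset.mul_sum]
  exact Finset.sum_congr rfl fun σ _ => by ring

lemma gibbs_sum {ι : Type*} (s : Finset ι) (F : ι → (Fin N → Bool) → ℝ) :
    gibbs N g βp η A B σA (fun σ => ∑ i ∈ s, F i σ)
      = ∑ i ∈ s, gibbs N g βp η A B σA (F i) := by
  classical
  induction s using Finset.induction with
  | empty => simp only [Finset.sum_empty]; exact gibbs_const g βp η A B σA 0
  | insert a s hx ih =>
      rw [Finset.sum_insert hx, ← ih]
      rw [← gibbs_add g βp η A B σA (F a) (fun σ => ∑ i ∈ s, F i σ)]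
      exact congrArg _ (funext fun σ => by rw [Finset.sum_insert hx])

lemma gcov_comm (f h : (Fin N → Bool) → ℝ) :
    gcov N g βp η A B σA f h = gcov N g βp η A B σA h f := by
  unfold gcov
  rw [show (fun σ => f σ * h σ) = (fun σ => h σ * f σ) from funext fun σ => mul_comm _ _]
  ring

lemma gcov_center (f h : (Fin N → Bool) → ℝ) :
    gcov N g βp η A B σA f h
      = gibbs N g βp η A B σA
          (fun σ => (f σ - gibbs N g βp η A B σA f) * (h σ - gibbs N g βp η A B σA h)) := by
  set mf := gibbs N g βp η A B σA f with hmf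
  set mh := gibbs N g βp η A B σA h with hmh
  have key : (fun σ => (f σ - mf) * (h σ - mh))
      = (fun σ => (f σ * h σ + ((-mf) * h σ + ((-mh) * f σ + mf * mh)))) := by
    funext σ; ring
  rw [key, gibbs_add, gibbs_add, gibbs_add, gibbs_smul, gibbs_smul, gibbs_const]
  unfold gcov
  ring

lemma gcov_self_nonneg (f : (Fin N → Bool) → ℝ) : 0 ≤ gcov N g βp η A B σA f f := by
  rw [gcov_center]
  exact gibbs_nonneg g βp η A B σA _ fun σ => mul_self_nonneg _

lemma gibbs_sq_le (f h : (Fin N → Bool) → ℝ) :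
    gibbs N g βp η A B σA (fun σ => f σ * h σ) ^ 2
      ≤ gibbs N g βp η A B σA (fun σ => f σ * f σ) *
          gibbs N g βp η A B σA (fun σ => h σ * h σ) := by
  have hZ : (0:ℝ) < Zs N g βp η A B σA := Zs_pos g βp η A B σA
  have key : Ex N g βp η A B σA (fun σ => f σ * h σ) ^ 2
      ≤ Ex N g βp η A B σA (fun σ => f σ * f σ) * Ex N g βp η A B σA (fun σ => h σ * h σ) := by
    have e1 : Ex N g βp η A B σA (fun σ => f σ * h σ)
        = ∑ σ : Fin N → Bool, (f σ * Real.sqrt (Wt N g βp η A B σA σ)) *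
            (h σ * Real.sqrt (Wt N g βp η A B σA σ)) := by
      unfold Ex
      refine Finset.sum_congr rfl fun σ _ => ?_
      rw [show (f σ * Real.sqrt (Wt N g βp η A B σA σ)) * (h σ * Real.sqrt (Wt N g βp η A B σA σ))
          = f σ * h σ * (Real.sqrt (Wt N g βp η A B σA σ) * Real.sqrt (Wt N g βp η A B σA σ))
          from by ring, Real.mul_self_sqrt (Wt_pos g βp η A B σA σ).le]
    have e2 : Ex N g βp η A B σA (fun σ => f σ * f σ)
        = ∑ σ : Fin N → Bool, (f σ * Real.sqrt (Wt N g βp η A B σA σ)) ^ 2 := by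
      unfold Ex
      refine Finset.sum_congr rfl fun σ _ => ?_
      rw [mul_pow, Real.sq_sqrt (Wt_pos g βp η A B σA σ).le]; ring
    have e3 : Ex N g βp η A B σA (fun σ => h σ * h σ)
        = ∑ σ : Fin N → Bool, (h σ * Real.sqrt (Wt N g βp η A B σA σ)) ^ 2 := by
      unfold Ex
      refine Finset.sum_congr rfl fun σ _ => ?_
      rw [mul_pow, Real.sq_sqrt (Wt_pos g βp η A B σA σ).le]; ring
    rw [e1, e2, e3]
    exact Finset.sum_mul_sq_le_sq_mul_sq _ _ _
  rw [gibbs_eq, gibbs_eq, gibbs_eq, div_pow, div_mul_div_comm, ← sq]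
  exact (div_le_div_iff_of_pos_right (by positivity)).mpr key

lemma gcov_sq_le (f h : (Fin N → Bool) → ℝ) :
    gcov N g βp η A B σA f h ^ 2
      ≤ gcov N g βp η A B σA f f * gcov N g βp η A B σA h h := by
  rw [gcov_center g βp η A B σA f h, gcov_center g βp η A B σA f f,
    gcov_center g βp η A B σA h h]
  exact gibbs_sq_le g βp η A B σA _ _

lemma gcov_sum_smul_left {ι : Type*} (s : Finset ι) (v : ι → ℝ)
    (u : ι → (Fin N → Bool) → ℝ) (f : (Fin N → Bool) → ℝ) :
    gcov N g βp η A B σA (fun σ => ∑ i ∈ s, v i * u i σ) f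
      = ∑ i ∈ s, v i * gcov N g βp η A B σA (u i) f := by
  unfold gcov
  have h1 : gibbs N g βp η A B σA (fun σ => (∑ i ∈ s, v i * u i σ) * f σ)
      = ∑ i ∈ s, v i * gibbs N g βp η A B σA (fun σ => u i σ * f σ) := by
    rw [show (fun σ => (∑ i ∈ s, v i * u i σ) * f σ)
        = (fun σ => ∑ i ∈ s, v i * (u i σ * f σ)) from funext fun σ => by
          rw [Finset.sum_mul]; exact Finset.sum_congr rfl fun i _ => by ring,
      gibbs_sum]
    exact Finset.sum_congr rfl fun i _ => gibbs_smul g βp η A B σA (v i) _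
  have h2 : gibbs N g βp η A B σA (fun σ => ∑ i ∈ s, v i * u i σ)
      = ∑ i ∈ s, v i * gibbs N g βp η A B σA (u i) := by
    rw [gibbs_sum]
    exact Finset.sum_congr rfl fun i _ => gibbs_smul g βp η A B σA (v i) _
  rw [h1, h2, Finset.sum_mul, ← Finset.sum_sub_distrib]
  exact Finset.sum_congr rfl fun i _ => by ring

end GcovBasics
noncomputable section Conditioning

open Finset

variable {N : ℕ}

/-- unnormalized restricted sums -/
def Sb (N : ℕ) (g : (p : ℕ) → (Fin p → Fin N) → ℝ) (βp : ℕ → ℝ) (η : Fin N → ℝ)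
    (A B : Finset (Fin N)) (σA : Fin N → Bool) (j : Fin N) (b : Bool)
    (G : (Fin N → Bool) → ℝ) : ℝ :=
  ∑ σ : Fin N → Bool, if σ j = b then G σ * Wt N g βp η A B σA σ else 0

def Qb (N : ℕ) (g : (p : ℕ) → (Fin p → Fin N) → ℝ) (βp : ℕ → ℝ) (η : Fin N → ℝ)
    (A B : Finset (Fin N)) (σA : Fin N → Bool) (j : Fin N) (b : Bool) : ℝ :=
  ∑ σ : Fin N → Bool, if σ j = b then Wt N g βp η A B σA σ else 0

variable (g : (p : ℕ) → (Fin p → Fin N) → ℝ) (βp : ℕ → ℝ) (η : Fin N → ℝ)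
variable (A B : Finset (Fin N)) (σA : Fin N → Bool) (j : Fin N) (b : Bool)

lemma Qb_pos : 0 < Qb N g βp η A B σA j b := by
  refine Finset.sum_pos' (fun σ _ => ?_) ⟨fun _ => b, Finset.mem_univ _, ?_⟩
  · by_cases h : σ j = b
    · simp only [h, if_true]; exact (Wt_pos g βp η A B σA σ).le
    · simp only [h, if_false]; exact le_rfl
  · simp only [if_true]
    exact Wt_pos g βp η A B σA _

lemma Qb_add : Qb N g βp η A B σA j true + Qb N g βp η A B σA j false = Zs N g βp η A B σA := by
  unfold Qb Zs
  rw [← Finset.sum_add_distrib]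
  refine Finset.sum_congr rfl fun σ _ => ?_
  cases h : σ j <;> simp [h]

lemma Sb_add (G : (Fin N → Bool) → ℝ) :
    Sb N g βp η A B σA j true G + Sb N g βp η A B σA j false G = Ex N g βp η A B σA G := by
  unfold Sb Ex
  rw [← Finset.sum_add_distrib]
  refine Finset.sum_congr rfl fun σ _ => ?_
  cases h : σ j <;> simp [h]

lemma Wt_insert (hj : j ∉ A) (σ : Fin N → Bool) :
    Wt N g βp η (insert j A) B (Function.update σA j b) σ
      = Wt N g βp η A B σA (Function.update σ j b) := by
  unfold Wt
  rw [ham_insert g βp η A B j hj σA σ b]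

lemma Zs_insert (hj : j ∉ A) :
    Zs N g βp η (insert j A) B (Function.update σA j b) = 2 * Qb N g βp η A B σA j b := by
  unfold Zs
  rw [show (∑ σ : Fin N → Bool, Wt N g βp η (insert j A) B (Function.update σA j b) σ)
      = ∑ σ : Fin N → Bool, Wt N g βp η A B σA (Function.update σ j b) from
    Finset.sum_congr rfl fun σ _ => Wt_insert g βp η A B σA j b hj σ]
  exact sum_update_eq j b (Wt N g βp η A B σA)

lemma Ex_insert (hj : j ∉ A) (G : (Fin N → Bool) → ℝ) :
    Ex N g βp η (insert j A) B (Function.update σA j b)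
        (fun σ => G (Function.update σ j b))
      = 2 * Sb N g βp η A B σA j b G := by
  unfold Ex
  rw [show (∑ σ : Fin N → Bool, G (Function.update σ j b) *
        Wt N g βp η (insert j A) B (Function.update σA j b) σ)
      = ∑ σ : Fin N → Bool,
          (fun τ => G τ * Wt N g βp η A B σA τ) (Function.update σ j b) from
    Finset.sum_congr rfl fun σ _ => by rw [Wt_insert g βp η A B σA j b hj σ]]
  rw [sum_update_eq j b (fun τ => G τ * Wt N g βp η A B σA τ)]
  rfl

lemma gibbs_cond (hj : j ∉ A) (G : (Fin N → Bool) → ℝ) :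
    gibbs N g βp η (insert j A) B (Function.update σA j b)
        (fun σ => G (Function.update σ j b))
      = Sb N g βp η A B σA j b G / Qb N g βp η A B σA j b := by
  rw [gibbs_eq, Ex_insert g βp η A B σA j b hj G, Zs_insert g βp η A B σA j b hj,
    mul_div_mul_left _ _ (two_ne_zero)]

end Conditioning
section Path

open Finset

variable {N : ℕ}

lemma path_aux (f : (Fin N → Bool) → ℝ) (S : Finset (Fin N))
    (hdep : dependsOn f S) (M : Fin N → ℝ)
    (hM : ∀ l ∈ S, ∀ ρ, |dd l f ρ| ≤ M l) :
    ∀ n : ℕ, ∀ σ τ : Fin N → Bool, (S.filter (fun l => σ l ≠ τ l)).card = n →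
      |f σ - f τ| ≤ ∑ l ∈ S.filter (fun l => σ l ≠ τ l), 2 * M l := by
  intro n
  induction n with
  | zero =>
      intro σ τ h
      have hempty : S.filter (fun l => σ l ≠ τ l) = ∅ := Finset.card_eq_zero.mp h
      have hagree : ∀ l ∈ S, σ l = τ l := by
        intro l hl
        by_contra hne
        exact Finset.notMem_empty l (hempty ▸ Finset.mem_filter.mpr ⟨hl, hne⟩)
      rw [hdep σ τ hagree, hempty]
      simp
  | succ n ih =>
      intro σ τ hc
      have hne : (S.filter (fun l => σ l ≠ τ l)).Nonempty :=
        Finset.card_pos.mp (hc ▸ Nat.succ_pos n)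
      obtain ⟨l, hl⟩ := hne
      have hlS : l ∈ S := (Finset.mem_filter.mp hl).1
      have hlne : σ l ≠ τ l := (Finset.mem_filter.mp hl).2
      have hτl : τ l = !σ l := by
        cases h1 : σ l <;> cases h2 : τ l <;> simp_all
      have hfilter : (S.filter fun i => flipAt l σ i ≠ τ i)
          = (S.filter fun i => σ i ≠ τ i).erase l := by
        ext i
        simp only [Finset.mem_filter, Finset.mem_erase]
        constructor
        · rintro ⟨hiS, hne2⟩
          by_cases hil : i = l
          · subst hil
            rw [flipAt_apply_self, hτl] at hne2
            exact absurd rfl hne2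
          · exact ⟨hil, hiS, by rwa [flipAt_apply_ne _ _ _ hil] at hne2⟩
        · rintro ⟨hil, hiS, hne2⟩
          exact ⟨hiS, by rwa [flipAt_apply_ne _ _ _ hil]⟩
      have hcard : (S.filter fun i => flipAt l σ i ≠ τ i).card = n := by
        rw [hfilter, Finset.card_erase_of_mem hl, hc]
        rfl
      have step1 : |f σ - f (flipAt l σ)| ≤ 2 * M l := by
        have : f σ - f (flipAt l σ) = 2 * dd l f σ := by
          unfold dd; ring
        rw [this, abs_mul, abs_two]
        exact mul_le_mul_of_nonneg_left (hM l hlS σ) (by norm_num)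
      have step2 := ih (flipAt l σ) τ hcard
      calc |f σ - f τ| ≤ |f σ - f (flipAt l σ)| + |f (flipAt l σ) - f τ| := abs_sub_le _ _ _
        _ ≤ 2 * M l + ∑ i ∈ (S.filter fun i => σ i ≠ τ i).erase l, 2 * M i := by
            rw [← hfilter]; exact add_le_add step1 step2
        _ = ∑ i ∈ S.filter fun i => σ i ≠ τ i, 2 * M i := Finset.add_sum_erase _ (fun i => 2 * M i) hl

lemma path_bound (f : (Fin N → Bool) → ℝ) (S : Finset (Fin N))
    (hdep : dependsOn f S) (M : Fin N → ℝ)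
    (hM : ∀ l ∈ S, ∀ ρ, |dd l f ρ| ≤ M l) (σ τ : Fin N → Bool) :
    |f σ - f τ| ≤ ∑ l ∈ S, 2 * M l := by
  refine (path_aux f S hdep M hM _ σ τ rfl).trans ?_
  refine Finset.sum_le_sum_of_subset_of_nonneg (Finset.filter_subset _ _) ?_
  intro l hlS _
  have := (abs_nonneg (dd l f (fun _ => true))).trans (hM l hlS _)
  linarith

lemma const_of_dd_zero (f : (Fin N → Bool) → ℝ) (S : Finset (Fin N))
    (hdep : dependsOn f S) (hdd : ∀ l ∈ S, ∀ ρ, dd l f ρ = 0) (σ τ : Fin N → Bool) :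
    f σ = f τ := by
  have := path_bound f S hdep (fun _ => 0) (fun l hl ρ => by rw [hdd l hl ρ]; simp) σ τ
  simp at this
  exact sub_eq_zero.mp this

end Path

noncomputable section DformBasics

open Finset

variable {N : ℕ}
variable (g : (p : ℕ) → (Fin p → Fin N) → ℝ) (βp : ℕ → ℝ) (η : Fin N → ℝ)
variable (A B : Finset (Fin N)) (σA : Fin N → Bool)

lemma gibbs_eq_zero_pointwise (h : (Fin N → Bool) → ℝ) (hnn : ∀ σ, 0 ≤ h σ)
    (h0 : gibbs N g βp η A B σA h = 0) : ∀ σ, h σ = 0 := by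
  intro σ
  rw [gibbs_eq, div_eq_zero_iff] at h0
  rcases h0 with h0 | h0
  · have : ∀ τ ∈ (Finset.univ : Finset (Fin N → Bool)), 0 ≤ h τ * Wt N g βp η A B σA τ :=
      fun τ _ => mul_nonneg (hnn τ) (Wt_pos g βp η A B σA τ).le
    have := (Finset.sum_eq_zero_iff_of_nonneg this).mp h0 σ (Finset.mem_univ σ)
    rcases mul_eq_zero.mp this with h | h
    · exact h
    · exact absurd h (Wt_pos g βp η A B σA σ).ne'
  · exact absurd h0 (Zs_pos g βp η A B σA).ne'

lemma Dform_summand_nonneg (f : (Fin N → Bool) → ℝ) (l : Fin N) :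
    0 ≤ gibbs N g βp η A B σA
      (fun σ => (Real.cosh (cavity N g βp η A B σA l σ))⁻¹ ^ 2 * dd l f σ ^ 2) :=
  gibbs_nonneg g βp η A B σA _ fun σ => by positivity

lemma Dform_nonneg (f : (Fin N → Bool) → ℝ) : 0 ≤ Dform N g βp η A B σA f :=
  Finset.sum_nonneg fun l _ => Dform_summand_nonneg g βp η A B σA f l

lemma Dform_pos (f : (Fin N → Bool) → ℝ) (hdep : dependsOn f ((A ∪ B)ᶜ))
    (hnc : ∃ σ τ, f σ ≠ f τ) : 0 < Dform N g βp η A B σA f := by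
  rcases lt_or_eq_of_le (Dform_nonneg g βp η A B σA f) with h | h
  · exact h
  exfalso
  have hzero : ∀ l ∈ (A ∪ B)ᶜ, gibbs N g βp η A B σA
      (fun σ => (Real.cosh (cavity N g βp η A B σA l σ))⁻¹ ^ 2 * dd l f σ ^ 2) = 0 := by
    intro l hl
    exact (Finset.sum_eq_zero_iff_of_nonneg
      (fun l _ => Dform_summand_nonneg g βp η A B σA f l)).mp h.symm l hl
  have hdd : ∀ l ∈ (A ∪ B)ᶜ, ∀ ρ, dd l f ρ = 0 := by
    intro l hl ρ
    have := gibbs_eq_zero_pointwise g βp η A B σA _ (fun σ => by positivity) (hzero l hl) ρ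
    have hcosh : (Real.cosh (cavity N g βp η A B σA l ρ))⁻¹ ^ 2 ≠ 0 := by
      have := Real.cosh_pos (x := cavity N g βp η A B σA l ρ)
      positivity
    have := (mul_eq_zero.mp this).resolve_left hcosh
    exact pow_eq_zero_iff two_ne_zero |>.mp this
  obtain ⟨σ, τ, hστ⟩ := hnc
  exact hστ (const_of_dd_zero f _ hdep hdd σ τ)

lemma gibbs_single_le (h : (Fin N → Bool) → ℝ) (hnn : ∀ σ, 0 ≤ h σ) (σ0 : Fin N → Bool) :
    h σ0 * Wt N g βp η A B σA σ0 / Zs N g βp η A B σA ≤ gibbs N g βp η A B σA h := by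
  rw [gibbs_eq]
  refine (div_le_div_iff_of_pos_right (Zs_pos g βp η A B σA)).mpr ?_
  exact Finset.single_le_sum
    (fun τ _ => mul_nonneg (hnn τ) (Wt_pos g βp η A B σA τ).le) (Finset.mem_univ σ0)

lemma gcov_self_le_sq (f : (Fin N → Bool) → ℝ) (c : ℝ) :
    gcov N g βp η A B σA f f ≤ gibbs N g βp η A B σA (fun σ => (f σ - c) ^ 2) := by
  have key : (fun σ => (f σ - c) ^ 2)
      = (fun σ => f σ * f σ + ((-2 * c) * f σ + c ^ 2)) := funext fun σ => by ring
  rw [key, gibbs_add, gibbs_add, gibbs_smul, gibbs_const]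
  unfold gcov
  nlinarith [sq_nonneg (gibbs N g βp η A B σA f - c)]

end DformBasics
noncomputable section GapBound

open Finset

variable {N : ℕ}
variable (g : (p : ℕ) → (Fin p → Fin N) → ℝ) (βp : ℕ → ℝ) (η : Fin N → ℝ)
variable (A B : Finset (Fin N)) (σA : Fin N → Bool)

lemma ratio_le_bound (f : (Fin N → Bool) → ℝ) (hdep : dependsOn f ((A ∪ B)ᶜ))
    (hnc : ∃ σ τ : Fin N → Bool, f σ ≠ f τ) :
    gcov N g βp η A B σA f f / Dform N g βp η A B σA f
      ≤ 4 * ((A ∪ B)ᶜ : Finset (Fin N)).card *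
          (∑ l ∈ ((A ∪ B)ᶜ : Finset (Fin N)), ∑ σ : Fin N → Bool,
            Zs N g βp η A B σA * Real.cosh (cavity N g βp η A B σA l σ) ^ 2 /
              Wt N g βp η A B σA σ) := by
  set Kc := ∑ l ∈ ((A ∪ B)ᶜ : Finset (Fin N)), ∑ σ : Fin N → Bool,
      Zs N g βp η A B σA * Real.cosh (cavity N g βp η A B σA l σ) ^ 2 /
        Wt N g βp η A B σA σ with hKc
  have htermnn : ∀ (l : Fin N) (σ : Fin N → Bool),
      0 ≤ Zs N g βp η A B σA * Real.cosh (cavity N g βp η A B σA l σ) ^ 2 /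
        Wt N g βp η A B σA σ := fun l σ => by
    have h1 := Zs_pos g βp η A B σA
    have h2 := Wt_pos g βp η A B σA σ
    positivity
  have hKcnn : 0 ≤ Kc :=
    Finset.sum_nonneg fun l _ => Finset.sum_nonneg fun σ _ => htermnn l σ
  have hKcb : ∀ l ∈ ((A ∪ B)ᶜ : Finset (Fin N)), ∀ σ : Fin N → Bool,
      Zs N g βp η A B σA * Real.cosh (cavity N g βp η A B σA l σ) ^ 2 /
        Wt N g βp η A B σA σ ≤ Kc := by
    intro l hl σ
    calc Zs N g βp η A B σA * Real.cosh (cavity N g βp η A B σA l σ) ^ 2 /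
          Wt N g βp η A B σA σ
        ≤ ∑ τ : Fin N → Bool, Zs N g βp η A B σA *
            Real.cosh (cavity N g βp η A B σA l τ) ^ 2 / Wt N g βp η A B σA τ :=
          Finset.single_le_sum (fun τ _ => htermnn l τ) (Finset.mem_univ σ)
      _ ≤ Kc := Finset.single_le_sum
          (f := fun l => ∑ τ : Fin N → Bool, Zs N g βp η A B σA *
            Real.cosh (cavity N g βp η A B σA l τ) ^ 2 / Wt N g βp η A B σA τ)
          (fun i _ => Finset.sum_nonneg fun τ _ => htermnn i τ) hl
  set tl := fun l : Fin N => gibbs N g βp η A B σA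
      (fun σ => (Real.cosh (cavity N g βp η A B σA l σ))⁻¹ ^ 2 * dd l f σ ^ 2) with htl
  have htlnn : ∀ l, 0 ≤ tl l := fun l => Dform_summand_nonneg g βp η A B σA f l
  have hD : Dform N g βp η A B σA f = ∑ l ∈ ((A ∪ B)ᶜ : Finset (Fin N)), tl l := rfl
  have hDpos : 0 < Dform N g βp η A B σA f := Dform_pos g βp η A B σA f hdep hnc
  -- Claim A
  have claimA : ∀ l ∈ ((A ∪ B)ᶜ : Finset (Fin N)), ∀ σ : Fin N → Bool,
      dd l f σ ^ 2 ≤ Kc * tl l := by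
    intro l hl σ
    have hsingle := gibbs_single_le g βp η A B σA
      (fun σ => (Real.cosh (cavity N g βp η A B σA l σ))⁻¹ ^ 2 * dd l f σ ^ 2)
      (fun σ => by positivity) σ
    have hcosh : Real.cosh (cavity N g βp η A B σA l σ) ≠ 0 :=
      (Real.cosh_pos _).ne'
    have hW : Wt N g βp η A B σA σ ≠ 0 := (Wt_pos g βp η A B σA σ).ne'
    have hZ : Zs N g βp η A B σA ≠ 0 := (Zs_pos g βp η A B σA).ne'
    have hkey : dd l f σ ^ 2
        = (Zs N g βp η A B σA * Real.cosh (cavity N g βp η A B σA l σ) ^ 2 /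
            Wt N g βp η A B σA σ) *
          ((Real.cosh (cavity N g βp η A B σA l σ))⁻¹ ^ 2 * dd l f σ ^ 2 *
            Wt N g βp η A B σA σ / Zs N g βp η A B σA) := by
      have hc2 : Real.cosh (cavity N g βp η A B σA l σ) ^ 2 ≠ 0 := pow_ne_zero 2 hcosh
      field_simp
    rw [hkey]
    refine mul_le_mul (hKcb l hl σ) hsingle ?_ hKcnn
    have h2 := Wt_pos g βp η A B σA σ
    have h1 := Zs_pos g βp η A B σA
    positivity
  set M := fun l : Fin N => Real.sqrt (Kc * tl l) with hM
  have hMb : ∀ l ∈ ((A ∪ B)ᶜ : Finset (Fin N)), ∀ ρ, |dd l f ρ| ≤ M l := by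
    intro l hl ρ
    rw [hM, ← Real.sqrt_sq_eq_abs]
    exact Real.sqrt_le_sqrt (claimA l hl ρ)
  set T := ∑ l ∈ ((A ∪ B)ᶜ : Finset (Fin N)), 2 * M l with hT
  have hvar : gcov N g βp η A B σA f f ≤ T ^ 2 := by
    refine (gcov_self_le_sq g βp η A B σA f (f (fun _ => true))).trans ?_
    have hpt : ∀ σ, (f σ - f (fun _ => true)) ^ 2 ≤ T ^ 2 := by
      intro σ
      rw [← sq_abs (f σ - f (fun _ => true))]
      exact pow_le_pow_left₀ (abs_nonneg _)
        (path_bound f _ hdep M hMb σ (fun _ => true)) 2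
    exact (gibbs_le g βp η A B σA _ _ hpt).trans_eq
      (gibbs_const g βp η A B σA (T ^ 2))
  have hT2 : T ^ 2 ≤ ((A ∪ B)ᶜ : Finset (Fin N)).card *
      (4 * Kc * Dform N g βp η A B σA f) := by
    rw [hT]
    refine (sq_sum_le_card_mul_sum_sq (s := ((A ∪ B)ᶜ : Finset (Fin N)))
      (f := fun l => 2 * M l)).trans ?_
    have : ∑ l ∈ ((A ∪ B)ᶜ : Finset (Fin N)), (2 * M l) ^ 2
        = 4 * Kc * Dform N g βp η A B σA f := by
      rw [hD, Finset.mul_sum]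
      refine Finset.sum_congr rfl fun l _ => ?_
      rw [mul_pow, hM, Real.sq_sqrt (mul_nonneg hKcnn (htlnn l))]
      ring
    rw [this]
  rw [div_le_iff₀ hDpos]
  calc gcov N g βp η A B σA f f ≤ T ^ 2 := hvar
    _ ≤ ((A ∪ B)ᶜ : Finset (Fin N)).card * (4 * Kc * Dform N g βp η A B σA f) := hT2
    _ = 4 * ((A ∪ B)ᶜ : Finset (Fin N)).card * Kc * Dform N g βp η A B σA f := by ring

lemma gapSet_bddAbove : BddAbove {r : ℝ | ∃ f : (Fin N → Bool) → ℝ,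
    dependsOn f ((A ∪ B)ᶜ) ∧ (∃ σ τ : Fin N → Bool, f σ ≠ f τ) ∧
    r = gcov N g βp η A B σA f f / Dform N g βp η A B σA f} := by
  refine ⟨4 * ((A ∪ B)ᶜ : Finset (Fin N)).card *
      (∑ l ∈ ((A ∪ B)ᶜ : Finset (Fin N)), ∑ σ : Fin N → Bool,
        Zs N g βp η A B σA * Real.cosh (cavity N g βp η A B σA l σ) ^ 2 /
          Wt N g βp η A B σA σ), ?_⟩
  rintro r ⟨f, hdep, hnc, rfl⟩
  exact ratio_le_bound g βp η A B σA f hdep hnc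

lemma ratio_le_gap (f : (Fin N → Bool) → ℝ) (hdep : dependsOn f ((A ∪ B)ᶜ))
    (hnc : ∃ σ τ : Fin N → Bool, f σ ≠ f τ) :
    gcov N g βp η A B σA f f / Dform N g βp η A B σA f ≤ gap N g βp η A B σA :=
  le_csSup (gapSet_bddAbove g βp η A B σA) ⟨f, hdep, hnc, rfl⟩

lemma gap_nonneg : 0 ≤ gap N g βp η A B σA := by
  refine Real.sSup_nonneg ?_
  rintro r ⟨f, hdep, hnc, rfl⟩
  exact div_nonneg (gcov_self_nonneg g βp η A B σA f) (Dform_nonneg g βp η A B σA f)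

lemma aSub_bddAbove (k : ℕ) : BddAbove {r : ℝ | ∃ (A B : Finset (Fin N)) (σA : Fin N → Bool),
    Disjoint A B ∧ (A ∪ B).card = k ∧ r = gap N g βp η A B σA} := by
  refine Set.Finite.bddAbove (Set.Finite.subset
    (Set.finite_range (fun x : Finset (Fin N) × Finset (Fin N) × (Fin N → Bool) =>
      gap N g βp η x.1 x.2.1 x.2.2)) ?_)
  rintro r ⟨A', B', σA', _, _, rfl⟩
  exact ⟨(A', B', σA'), rfl⟩

lemma gap_le_aSub (k : ℕ) (hd : Disjoint A B) (hc : (A ∪ B).card = k) :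
    gap N g βp η A B σA ≤ aSub N g βp η k :=
  le_csSup (aSub_bddAbove g βp η k) ⟨A, B, σA, hd, hc, rfl⟩

lemma aSub_nonneg (k : ℕ) : 0 ≤ aSub N g βp η k := by
  refine Real.sSup_nonneg ?_
  rintro r ⟨A', B', σA', _, _, rfl⟩
  exact gap_nonneg g βp η A' B' σA'

end GapBound
noncomputable section PerJ

open Finset

variable {N : ℕ}
variable (g : (p : ℕ) → (Fin p → Fin N) → ℝ) (βp : ℕ → ℝ) (η : Fin N → ℝ)
variable (A B : Finset (Fin N)) (σA : Fin N → Bool) (j : Fin N)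

lemma update_flip_comm (l : Fin N) (hlj : l ≠ j) (b : Bool) (σ : Fin N → Bool) :
    Function.update (flipAt l σ) j b = flipAt l (Function.update σ j b) := by
  funext i
  by_cases hij : i = j
  · subst hij
    rw [Function.update_self, flipAt_apply_ne _ _ _ (Ne.symm hlj), Function.update_self]
  · rw [Function.update_of_ne hij]
    by_cases hil : i = l
    · subst hil
      rw [flipAt_apply_self, flipAt_apply_self, Function.update_of_ne hij]
    · rw [flipAt_apply_ne _ _ _ hil, flipAt_apply_ne _ _ _ hil, Function.update_of_ne hij]

lemma dd_update (l : Fin N) (hlj : l ≠ j) (b : Bool) (F : (Fin N → Bool) → ℝ)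
    (σ : Fin N → Bool) :
    dd l (fun τ => F (Function.update τ j b)) σ = dd l F (Function.update σ j b) := by
  show (F (Function.update σ j b) - F (Function.update (flipAt l σ) j b)) / 2 = _
  rw [update_flip_comm j l hlj b σ]
  rfl

lemma cavity_insert (hjA : j ∉ A) (b : Bool) (l : Fin N) (hlj : l ≠ j) (σ : Fin N → Bool) :
    cavity N g βp η (insert j A) B (Function.update σA j b) l σ
      = cavity N g βp η A B σA l (Function.update σ j b) := by
  unfold cavity
  have hham : ham N g βp η (insert j A) B (Function.update σA j b)
      = fun τ => ham N g βp η A B σA (Function.update τ j b) :=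
    funext fun τ => ham_insert g βp η A B j hjA σA τ b
  rw [hham, dd_update j l hlj b, Function.update_of_ne hlj]

lemma mag_formula :
    mag N g βp η A B σA j
      = (Qb N g βp η A B σA j true - Qb N g βp η A B σA j false) / Zs N g βp η A B σA := by
  unfold mag
  rw [gibbs_eq, ← Sb_add g βp η A B σA j (fun σ => spinVal (σ j))]
  congr 1
  have h1 : Sb N g βp η A B σA j true (fun σ => spinVal (σ j)) = Qb N g βp η A B σA j true := by
    unfold Sb Qb
    refine Finset.sum_congr rfl fun σ _ => ?_
    by_cases h : σ j = true <;> simp [h, spinVal]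
  have h2 : Sb N g βp η A B σA j false (fun σ => spinVal (σ j))
      = -Qb N g βp η A B σA j false := by
    unfold Sb Qb
    rw [← Finset.sum_neg_distrib]
    refine Finset.sum_congr rfl fun σ _ => ?_
    by_cases h : σ j = false <;> simp [h, spinVal]
  rw [h1, h2]
  ring

lemma mag_sq_lt_one : mag N g βp η A B σA j ^ 2 < 1 := by
  rw [mag_formula g βp η A B σA j]
  have hT := Qb_pos g βp η A B σA j true
  have hF := Qb_pos g βp η A B σA j false
  have hZ : Zs N g βp η A B σA = Qb N g βp η A B σA j true + Qb N g βp η A B σA j false :=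
    (Qb_add g βp η A B σA j).symm
  rw [hZ, div_pow, div_lt_one (by positivity)]
  nlinarith

lemma spin_gibbs_formula (f : (Fin N → Bool) → ℝ) :
    gibbs N g βp η A B σA (fun σ => spinVal (σ j) * f σ)
      = (Sb N g βp η A B σA j true f - Sb N g βp η A B σA j false f) /
          Zs N g βp η A B σA := by
  rw [gibbs_eq, ← Sb_add g βp η A B σA j (fun σ => spinVal (σ j) * f σ)]
  congr 1
  have h1 : Sb N g βp η A B σA j true (fun σ => spinVal (σ j) * f σ)
      = Sb N g βp η A B σA j true f := by
    unfold Sb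
    refine Finset.sum_congr rfl fun σ _ => ?_
    by_cases h : σ j = true <;> simp [h, spinVal]
  have h2 : Sb N g βp η A B σA j false (fun σ => spinVal (σ j) * f σ)
      = -Sb N g βp η A B σA j false f := by
    unfold Sb
    rw [← Finset.sum_neg_distrib]
    refine Finset.sum_congr rfl fun σ _ => ?_
    by_cases h : σ j = false <;> simp [h, spinVal]
  rw [h1, h2]
  ring

lemma gibbs_formula (f : (Fin N → Bool) → ℝ) :
    gibbs N g βp η A B σA f
      = (Sb N g βp η A B σA j true f + Sb N g βp η A B σA j false f) /
          Zs N g βp η A B σA := by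
  rw [gibbs_eq, ← Sb_add g βp η A B σA j f]

/-- Dirichlet form decomposition under conditioning. -/
lemma dirichlet_cond (hj : j ∉ A ∪ B) (f : (Fin N → Bool) → ℝ) :
    (Qb N g βp η A B σA j true / Zs N g βp η A B σA) *
        Dform N g βp η (insert j A) B (Function.update σA j true)
          (fun σ => f (Function.update σ j true))
      + (Qb N g βp η A B σA j false / Zs N g βp η A B σA) *
          Dform N g βp η (insert j A) B (Function.update σA j false)
            (fun σ => f (Function.update σ j false))
      ≤ Dform N g βp η A B σA f := by
  have hjA : j ∉ A := fun h => hj (Finset.mem_union_left _ h)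
  have hfree' : ((insert j A ∪ B)ᶜ : Finset (Fin N)) = ((A ∪ B)ᶜ).erase j := by
    rw [Finset.insert_union, Finset.compl_insert]
  set Gl := fun (l : Fin N) (τ : Fin N → Bool) =>
    (Real.cosh (cavity N g βp η A B σA l τ))⁻¹ ^ 2 * dd l f τ ^ 2 with hGl
  have hDb : ∀ b : Bool, Dform N g βp η (insert j A) B (Function.update σA j b)
      (fun σ => f (Function.update σ j b))
      = ∑ l ∈ ((A ∪ B)ᶜ).erase j, Sb N g βp η A B σA j b (Gl l) / Qb N g βp η A B σA j b := by
    intro b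
    unfold Dform
    rw [hfree']
    refine Finset.sum_congr rfl fun l hl => ?_
    have hlj : l ≠ j := Finset.ne_of_mem_erase hl
    have hinteg : (fun σ => (Real.cosh (cavity N g βp η (insert j A) B
          (Function.update σA j b) l σ))⁻¹ ^ 2 *
          dd l (fun τ => f (Function.update τ j b)) σ ^ 2)
        = fun σ => Gl l (Function.update σ j b) := by
      funext σ
      rw [cavity_insert g βp η A B σA j hjA b l hlj σ, dd_update j l hlj b f σ, hGl]
    rw [hinteg]
    exact gibbs_cond g βp η A B σA j b hjA (Gl l)
  rw [hDb true, hDb false, Finset.mul_sum, Finset.mul_sum, ← Finset.sum_add_distrib]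
  have hstep : ∀ l ∈ ((A ∪ B)ᶜ).erase j,
      Qb N g βp η A B σA j true / Zs N g βp η A B σA *
          (Sb N g βp η A B σA j true (Gl l) / Qb N g βp η A B σA j true)
        + Qb N g βp η A B σA j false / Zs N g βp η A B σA *
            (Sb N g βp η A B σA j false (Gl l) / Qb N g βp η A B σA j false)
      = gibbs N g βp η A B σA (Gl l) := by
    intro l _
    rw [gibbs_eq, ← Sb_add g βp η A B σA j (Gl l)]
    have h1 := (Qb_pos g βp η A B σA j true).ne'
    have h2 := (Qb_pos g βp η A B σA j false).ne'
    have h3 := (Zs_pos g βp η A B σA).ne'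
    field_simp
  rw [Finset.sum_congr rfl hstep]
  refine Finset.sum_le_sum_of_subset_of_nonneg (Finset.erase_subset _ _) ?_
  intro l hl _
  exact Dform_summand_nonneg g βp η A B σA f l

end PerJ
section Algebra

lemma algebra_key (qT qF sT sF xT xF DT DF D aS : ℝ)
    (hqT : 0 < qT) (hqF : 0 < qF) (haS : 0 ≤ aS)
    (hVTle : xT / qT - (sT / qT) ^ 2 ≤ aS * DT)
    (hVFle : xF / qF - (sF / qF) ^ 2 ≤ aS * DF)
    (hDir : (qT / (qT + qF)) * DT + (qF / (qT + qF)) * DF ≤ D) :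
    (xT + xF) / (qT + qF) - ((sT + sF) / (qT + qF)) ^ 2
      ≤ aS * D + ((sT - sF) / (qT + qF) -
          ((qT - qF) / (qT + qF)) * ((sT + sF) / (qT + qF))) ^ 2 /
            (1 - ((qT - qF) / (qT + qF)) ^ 2) := by
  have hZ : 0 < qT + qF := by linarith
  have hm : 1 - ((qT - qF) / (qT + qF)) ^ 2 = 4 * qT * qF / (qT + qF) ^ 2 := by
    field_simp
    ring
  have hcc : ((sT - sF) / (qT + qF) -
        ((qT - qF) / (qT + qF)) * ((sT + sF) / (qT + qF))) ^ 2 /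
          (1 - ((qT - qF) / (qT + qF)) ^ 2)
      = (qT * qF / (qT + qF) ^ 2) * (sT / qT - sF / qF) ^ 2 := by
    rw [hm]
    have e1 : qT ≠ 0 := hqT.ne'
    have e2 : qF ≠ 0 := hqF.ne'
    have e3 : qT + qF ≠ 0 := hZ.ne'
    field_simp
    ring
  have hlotv : (xT + xF) / (qT + qF) - ((sT + sF) / (qT + qF)) ^ 2
      = (qT / (qT + qF)) * (xT / qT - (sT / qT) ^ 2)
        + (qF / (qT + qF)) * (xF / qF - (sF / qF) ^ 2)
        + (qT * qF / (qT + qF) ^ 2) * (sT / qT - sF / qF) ^ 2 := by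
    field_simp
    ring
  rw [hlotv, hcc]
  have h1 : (qT / (qT + qF)) * (xT / qT - (sT / qT) ^ 2)
      ≤ (qT / (qT + qF)) * (aS * DT) :=
    mul_le_mul_of_nonneg_left hVTle (by positivity)
  have h2 : (qF / (qT + qF)) * (xF / qF - (sF / qF) ^ 2)
      ≤ (qF / (qT + qF)) * (aS * DF) :=
    mul_le_mul_of_nonneg_left hVFle (by positivity)
  have h3 : (qT / (qT + qF)) * (aS * DT) + (qF / (qT + qF)) * (aS * DF)
      = aS * ((qT / (qT + qF)) * DT + (qF / (qT + qF)) * DF) := by ring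
  have h4 : aS * ((qT / (qT + qF)) * DT + (qF / (qT + qF)) * DF) ≤ aS * D :=
    mul_le_mul_of_nonneg_left hDir haS
  linarith

end Algebra
noncomputable section KeyStep

open Finset

variable {N : ℕ}
variable (g : (p : ℕ) → (Fin p → Fin N) → ℝ) (βp : ℕ → ℝ) (η : Fin N → ℝ)
variable (A B : Finset (Fin N)) (σA : Fin N → Bool)

lemma keystep (hd : Disjoint A B) (j : Fin N) (hj : j ∉ A ∪ B) (k : ℕ)
    (hk : (A ∪ B).card = k) (f : (Fin N → Bool) → ℝ) (hdep : dependsOn f ((A ∪ B)ᶜ)) :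
    gcov N g βp η A B σA f f
      ≤ aSub N g βp η (k + 1) * Dform N g βp η A B σA f
        + gcov N g βp η A B σA (fun σ => spinVal (σ j)) f ^ 2 /
            (1 - mag N g βp η A B σA j ^ 2) := by
  have hjA : j ∉ A := fun h => hj (Finset.mem_union_left _ h)
  have hjB : j ∉ B := fun h => hj (Finset.mem_union_right _ h)
  set aS := aSub N g βp η (k + 1) with haSdef
  have haS : 0 ≤ aS := aSub_nonneg g βp η (k + 1)
  set qT := Qb N g βp η A B σA j true with hqTdef
  set qF := Qb N g βp η A B σA j false with hqFdef
  set sT := Sb N g βp η A B σA j true f with hsTdef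
  set sF := Sb N g βp η A B σA j false f with hsFdef
  set xT := Sb N g βp η A B σA j true (fun τ => f τ * f τ) with hxTdef
  set xF := Sb N g βp η A B σA j false (fun τ => f τ * f τ) with hxFdef
  have hqT : 0 < qT := Qb_pos g βp η A B σA j true
  have hqF : 0 < qF := Qb_pos g βp η A B σA j false
  have hZQ : Zs N g βp η A B σA = qT + qF := (Qb_add g βp η A B σA j).symm
  -- conditional variance bound
  have hP : ∀ b : Bool,
      gcov N g βp η (insert j A) B (Function.update σA j b)
          (fun σ => f (Function.update σ j b)) (fun σ => f (Function.update σ j b))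
        ≤ aS * Dform N g βp η (insert j A) B (Function.update σA j b)
            (fun σ => f (Function.update σ j b)) := by
    intro b
    set fb := fun σ => f (Function.update σ j b) with hfbdef
    have hdepb : dependsOn fb ((insert j A ∪ B)ᶜ) := by
      intro σ τ hagree
      refine hdep _ _ ?_
      intro i hi
      by_cases hij : i = j
      · subst hij; simp
      · have hiAB : i ∉ A ∪ B := Finset.mem_compl.mp hi
        have : i ∈ (insert j A ∪ B)ᶜ := by
          rw [Finset.insert_union, Finset.compl_insert]
          exact Finset.mem_erase.mpr ⟨hij, hi⟩
        rw [Function.update_of_ne hij, Function.update_of_ne hij]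
        exact hagree i this
    by_cases hc : ∃ σ τ : Fin N → Bool, fb σ ≠ fb τ
    · have hDpos := Dform_pos g βp η (insert j A) B (Function.update σA j b) fb hdepb hc
      have hr := ratio_le_gap g βp η (insert j A) B (Function.update σA j b) fb hdepb hc
      have hdisj : Disjoint (insert j A) B := by
        rw [Finset.disjoint_insert_left]
        exact ⟨hjB, hd⟩
      have hcard' : (insert j A ∪ B).card = k + 1 := by
        rw [Finset.insert_union, Finset.card_insert_of_notMem hj, hk]
      have hgle := gap_le_aSub g βp η (insert j A) B (Function.update σA j b)
        (k + 1) hdisj hcard'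
      calc gcov N g βp η (insert j A) B (Function.update σA j b) fb fb
          = (gcov N g βp η (insert j A) B (Function.update σA j b) fb fb /
              Dform N g βp η (insert j A) B (Function.update σA j b) fb) *
              Dform N g βp η (insert j A) B (Function.update σA j b) fb := by
            rw [div_mul_cancel₀ _ hDpos.ne']
        _ ≤ aS * Dform N g βp η (insert j A) B (Function.update σA j b) fb :=
            mul_le_mul_of_nonneg_right (hr.trans hgle) hDpos.le
    · push_neg at hc
      have hfb : fb = fun _ => fb (fun _ => true) := funext fun σ => hc σ _
      have hzero : gcov N g βp η (insert j A) B (Function.update σA j b) fb fb = 0 := by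
        rw [hfb]
        unfold gcov
        rw [gibbs_const, gibbs_const]
        ring
      rw [hzero]
      exact mul_nonneg haS (Dform_nonneg g βp η (insert j A) B (Function.update σA j b) fb)
  -- conditional expectations via Sb/Qb
  have hVb : ∀ b : Bool,
      gcov N g βp η (insert j A) B (Function.update σA j b)
          (fun σ => f (Function.update σ j b)) (fun σ => f (Function.update σ j b))
        = Sb N g βp η A B σA j b (fun τ => f τ * f τ) / Qb N g βp η A B σA j b
          - (Sb N g βp η A B σA j b f / Qb N g βp η A B σA j b) ^ 2 := by
    intro b
    unfold gcov
    have h1 : gibbs N g βp η (insert j A) B (Function.update σA j b)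
        (fun σ => f (Function.update σ j b) * f (Function.update σ j b))
        = Sb N g βp η A B σA j b (fun τ => f τ * f τ) / Qb N g βp η A B σA j b :=
      gibbs_cond g βp η A B σA j b hjA (fun τ => f τ * f τ)
    have h2 : gibbs N g βp η (insert j A) B (Function.update σA j b)
        (fun σ => f (Function.update σ j b))
        = Sb N g βp η A B σA j b f / Qb N g βp η A B σA j b :=
      gibbs_cond g βp η A B σA j b hjA f
    rw [h1, h2]
    ring
  have hDir := dirichlet_cond g βp η A B σA j hj f
  -- formulas for the unconditional quantities
  have hgff : gcov N g βp η A B σA f f = (xT + xF) / (qT + qF) -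
      ((sT + sF) / (qT + qF)) ^ 2 := by
    unfold gcov
    rw [gibbs_formula g βp η A B σA j (fun σ => f σ * f σ), gibbs_formula g βp η A B σA j f,
      hZQ]
    ring
  have hmg : mag N g βp η A B σA j = (qT - qF) / (qT + qF) := by
    rw [mag_formula g βp η A B σA j, hZQ]
  have hcv : gcov N g βp η A B σA (fun σ => spinVal (σ j)) f
      = (sT - sF) / (qT + qF) - ((qT - qF) / (qT + qF)) * ((sT + sF) / (qT + qF)) := by
    unfold gcov
    have hspin : gibbs N g βp η A B σA (fun σ => spinVal (σ j))
        = (qT - qF) / (qT + qF) := by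
      rw [← hZQ]
      exact mag_formula g βp η A B σA j
    have hsf : gibbs N g βp η A B σA (fun σ => spinVal (σ j) * f σ)
        = (sT - sF) / (qT + qF) := by
      rw [← hZQ]
      exact spin_gibbs_formula g βp η A B σA j f
    rw [hsf, hspin, gibbs_formula g βp η A B σA j f, hZQ]
  rw [hgff, hmg, hcv]
  refine algebra_key qT qF sT sF xT xF
    (Dform N g βp η (insert j A) B (Function.update σA j true)
      (fun σ => f (Function.update σ j true)))
    (Dform N g βp η (insert j A) B (Function.update σA j false)
      (fun σ => f (Function.update σ j false)))
    (Dform N g βp η A B σA f) aS hqT hqF haS ?_ ?_ ?_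
  · rw [← hVb true]; exact hP true
  · rw [← hVb false]; exact hP false
  · have := hDir
    rw [hZQ] at this
    exact this
end KeyStep
noncomputable section OpStep

open Finset

variable {N : ℕ}
variable (g : (p : ℕ) → (Fin p → Fin N) → ℝ) (βp : ℕ → ℝ) (η : Fin N → ℝ)
variable (A B : Finset (Fin N)) (σA : Fin N → Bool)

lemma op_step (f : (Fin N → Bool) → ℝ) :
    ∑ j ∈ ((A ∪ B)ᶜ : Finset (Fin N)),
        gcov N g βp η A B σA (fun σ => spinVal (σ j)) f ^ 2 /
          (1 - mag N g βp η A B σA j ^ 2)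
      ≤ opNorm (conjCorr N g βp η A B σA) * gcov N g βp η A B σA f f := by
  classical
  set V := gcov N g βp η A B σA f f with hVdef
  have hV : 0 ≤ V := gcov_self_nonneg g βp η A B σA f
  set c : {i : Fin N // i ∈ (A ∪ B)ᶜ} → ℝ :=
    fun i => gcov N g βp η A B σA (fun σ => spinVal (σ i.1)) f with hcdef
  set m : {i : Fin N // i ∈ (A ∪ B)ᶜ} → ℝ := fun i => mag N g βp η A B σA i.1 with hmdef
  have hm : ∀ i, 0 < 1 - m i ^ 2 := by
    intro i
    have := mag_sq_lt_one g βp η A B σA i.1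
    simp only [hmdef]
    linarith
  set v : {i : Fin N // i ∈ (A ∪ B)ᶜ} → ℝ := fun i => c i / (1 - m i ^ 2) with hvdef
  set w : EuclideanSpace ℝ {i : Fin N // i ∈ (A ∪ B)ᶜ} :=
    WithLp.toLp 2 (fun i => c i / Real.sqrt (1 - m i ^ 2)) with hwdef
  set L : ℝ := ∑ i : {i : Fin N // i ∈ (A ∪ B)ᶜ}, c i ^ 2 / (1 - m i ^ 2) with hLdef
  have hLHS : ∑ j ∈ ((A ∪ B)ᶜ : Finset (Fin N)),
      gcov N g βp η A B σA (fun σ => spinVal (σ j)) f ^ 2 /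
        (1 - mag N g βp η A B σA j ^ 2) = L := by
    rw [hLdef, ← Finset.sum_coe_sort ((A ∪ B)ᶜ : Finset (Fin N))
      (fun j => gcov N g βp η A B σA (fun σ => spinVal (σ j)) f ^ 2 /
        (1 - mag N g βp η A B σA j ^ 2))]
  have hLnn : 0 ≤ L :=
    Finset.sum_nonneg fun i _ => div_nonneg (sq_nonneg _) (hm i).le
  have hwsq : ∀ i, w i ^ 2 = c i ^ 2 / (1 - m i ^ 2) := by
    intro i
    rw [hwdef, PiLp.toLp_apply]
    rw [div_pow, Real.sq_sqrt (hm i).le]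
  have hnw : ‖w‖ ^ 2 = L := by
    rw [EuclideanSpace.norm_eq, Real.sq_sqrt (Finset.sum_nonneg fun i _ => sq_nonneg _)]
    rw [hLdef]
    refine Finset.sum_congr rfl fun i _ => ?_
    rw [Real.norm_eq_abs, sq_abs]
    exact hwsq i
  set T := Matrix.toEuclideanCLM (𝕜 := ℝ) (conjCorr N g βp η A B σA) with hTdef
  have hop : opNorm (conjCorr N g βp η A B σA) = ‖T‖ := rfl
  have hTw : ∀ i, T w i = ∑ k, conjCorr N g βp η A B σA i k * w k := by
    intro i
    have h := congrFun (Matrix.ofLp_toEuclideanCLM (conjCorr N g βp η A B σA) w) i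
    exact h
  have hentry : ∀ i k, conjCorr N g βp η A B σA i k
      = Real.sqrt ((1 - m i ^ 2)⁻¹) *
          gcov N g βp η A B σA (fun σ => spinVal (σ i.1)) (fun σ => spinVal (σ k.1)) *
          Real.sqrt ((1 - m k ^ 2)⁻¹) := by
    intro i k
    unfold conjCorr lambdaHalf corrM
    rw [Matrix.mul_diagonal, Matrix.diagonal_mul]
    rfl
  have hv : ∀ i, w i * Real.sqrt ((1 - m i ^ 2)⁻¹) = v i := by
    intro i
    rw [hwdef, PiLp.toLp_apply, hvdef, Real.sqrt_inv, ← div_eq_mul_inv, div_div,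
      Real.mul_self_sqrt (hm i).le]
  have hinner : (inner ℝ w (T w) : ℝ)
      = ∑ i, ∑ k, v i * (v k *
          gcov N g βp η A B σA (fun σ => spinVal (σ i.1)) (fun σ => spinVal (σ k.1))) := by
    rw [PiLp.inner_apply]
    refine Finset.sum_congr rfl fun i _ => ?_
    rw [RCLike.inner_apply, conj_trivial, hTw i, Finset.sum_mul]
    refine Finset.sum_congr rfl fun k _ => ?_
    rw [hentry i k]
    have h1 := hv i
    have h2 := hv k
    linear_combination
      (gcov N g βp η A B σA (fun σ => spinVal (σ i.1)) (fun σ => spinVal (σ k.1)))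
          * (w i * Real.sqrt ((1 - m i ^ 2)⁻¹)) * h2
        + (gcov N g βp η A B σA (fun σ => spinVal (σ i.1)) (fun σ => spinVal (σ k.1)))
          * v k * h1
  set hvfun : (Fin N → Bool) → ℝ :=
    fun σ => ∑ i : {i : Fin N // i ∈ (A ∪ B)ᶜ}, v i * spinVal (σ i.1) with hvfdef
  have hs1 : (inner ℝ w (T w) : ℝ) = gcov N g βp η A B σA hvfun hvfun := by
    rw [hinner, hvfdef]
    rw [gcov_sum_smul_left g βp η A B σA Finset.univ v
      (fun i σ => spinVal (σ i.1))]
    refine (Finset.sum_congr rfl fun i _ => ?_).symm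
    rw [gcov_comm, gcov_sum_smul_left g βp η A B σA Finset.univ v
      (fun k σ => spinVal (σ k.1)), Finset.mul_sum]
    refine Finset.sum_congr rfl fun k _ => ?_
    rw [gcov_comm]
  have hs2 : gcov N g βp η A B σA hvfun f = L := by
    rw [hvfdef, gcov_sum_smul_left g βp η A B σA Finset.univ v
      (fun i σ => spinVal (σ i.1)) f, hLdef]
    refine Finset.sum_congr rfl fun i _ => ?_
    rw [hvdef]
    have := (hm i).ne'
    field_simp
    ring
  have hCS : L ^ 2 ≤ gcov N g βp η A B σA hvfun hvfun * V := by
    rw [← hs2]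
    exact gcov_sq_le g βp η A B σA hvfun f
  have hTb : gcov N g βp η A B σA hvfun hvfun ≤ ‖T‖ * L := by
    rw [← hs1]
    calc (inner ℝ w (T w) : ℝ) ≤ ‖w‖ * ‖T w‖ := real_inner_le_norm w (T w)
      _ ≤ ‖w‖ * (‖T‖ * ‖w‖) :=
          mul_le_mul_of_nonneg_left (T.le_opNorm w) (norm_nonneg w)
      _ = ‖T‖ * ‖w‖ ^ 2 := by ring
      _ = ‖T‖ * L := by rw [hnw]
  rw [hLHS, hop]
  rcases eq_or_lt_of_le hLnn with h0 | hL
  · rw [← h0]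
    exact mul_nonneg (norm_nonneg _) hV
  · have h2 : L ^ 2 ≤ (‖T‖ * L) * V :=
      hCS.trans (mul_le_mul_of_nonneg_right hTb hV)
    nlinarith [h2, hL]

end OpStep

theorem gap_iteration_corr_bound
    (N : ℕ) (g : (p : ℕ) → (Fin p → Fin N) → ℝ) (βp : ℕ → ℝ) (η : Fin N → ℝ)
    (hβp : ∀ p, 0 ≤ βp p)
    (hβsum : Summable fun p : ℕ =>
      if 2 ≤ p then Real.sqrt ((p : ℝ) ^ 3 * Real.log p) * βp p else 0)
    (hg0 : ∀ (p : ℕ) (t : Fin p → Fin N), ¬ Function.Injective t → g p t = 0)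
    (hH : HamSummable N g βp)
    (A B : Finset (Fin N)) (hAB : Disjoint A B) (k : ℕ) (hcard : (A ∪ B).card = k)
    (hk : k + 2 ≤ N) (σA : Fin N → Bool) :
    (1 - opNorm (conjCorr N g βp η A B σA) / ((N : ℝ) - k)) * gap N g βp η A B σA ≤
      aSub N g βp η (k + 1) := by
  classical
  have hkN : k ≤ N := by omega
  have hcardS : ((A ∪ B)ᶜ : Finset (Fin N)).card = N - k := by
    rw [Finset.card_compl, hcard, Fintype.card_fin]
  have hnR : ((((A ∪ B)ᶜ : Finset (Fin N)).card : ℕ) : ℝ) = (N : ℝ) - k := by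
    rw [hcardS, Nat.cast_sub hkN]
  have hnpos : (0:ℝ) < (N : ℝ) - k := by
    have : (k : ℝ) < (N : ℝ) := by exact_mod_cast (by omega : k < N)
    linarith
  set aS := aSub N g βp η (k + 1) with haSdef
  have haS : 0 ≤ aS := aSub_nonneg g βp η (k + 1)
  set op := opNorm (conjCorr N g βp η A B σA) with hopdef
  have hop : 0 ≤ op := norm_nonneg _
  set coef := 1 - op / ((N : ℝ) - k) with hcoefdef
  have claim : ∀ r ∈ {r : ℝ | ∃ f : (Fin N → Bool) → ℝ, dependsOn f ((A ∪ B)ᶜ) ∧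
      (∃ σ τ : Fin N → Bool, f σ ≠ f τ) ∧
      r = gcov N g βp η A B σA f f / Dform N g βp η A B σA f}, coef * r ≤ aS := by
    rintro r ⟨f, hdep, hnc, rfl⟩
    set V := gcov N g βp η A B σA f f with hVdef
    set D := Dform N g βp η A B σA f with hDdef
    have hDpos : 0 < D := Dform_pos g βp η A B σA f hdep hnc
    have hV : 0 ≤ V := gcov_self_nonneg g βp η A B σA f
    have hperj : ∀ j ∈ ((A ∪ B)ᶜ : Finset (Fin N)),
        V ≤ aS * D + gcov N g βp η A B σA (fun σ => spinVal (σ j)) f ^ 2 /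
          (1 - mag N g βp η A B σA j ^ 2) := fun j hj =>
      keystep g βp η A B σA hAB j (Finset.mem_compl.mp hj) k hcard f hdep
    have hsum1 : ∑ _j ∈ ((A ∪ B)ᶜ : Finset (Fin N)), V
        ≤ ∑ j ∈ ((A ∪ B)ᶜ : Finset (Fin N)), (aS * D +
            gcov N g βp η A B σA (fun σ => spinVal (σ j)) f ^ 2 /
              (1 - mag N g βp η A B σA j ^ 2)) :=
      Finset.sum_le_sum hperj
    rw [Finset.sum_const, Finset.sum_add_distrib, Finset.sum_const] at hsum1
    have hsum2 := op_step g βp η A B σA f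
    have hn := hnR
    have hsum3 : ((N : ℝ) - k) * V ≤ ((N : ℝ) - k) * (aS * D) + op * V := by
      have e1 : (((A ∪ B)ᶜ : Finset (Fin N)).card : ℝ) • V = ((N : ℝ) - k) * V := by
        rw [← hnR]; simp [nsmul_eq_mul]
      have e2 : (((A ∪ B)ᶜ : Finset (Fin N)).card : ℝ) • (aS * D)
          = ((N : ℝ) - k) * (aS * D) := by
        rw [← hnR]; simp [nsmul_eq_mul]
      have h1' : ((((A ∪ B)ᶜ : Finset (Fin N)).card : ℕ) : ℝ) * V
          ≤ ((((A ∪ B)ᶜ : Finset (Fin N)).card : ℕ) : ℝ) * (aS * D) +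
            ∑ j ∈ ((A ∪ B)ᶜ : Finset (Fin N)),
              gcov N g βp η A B σA (fun σ => spinVal (σ j)) f ^ 2 /
                (1 - mag N g βp η A B σA j ^ 2) := by
        simpa [nsmul_eq_mul] using hsum1
      rw [hnR] at h1'
      linarith [hsum2]
    have hkey : (((N : ℝ) - k) - op) * V ≤ ((N : ℝ) - k) * (aS * D) := by nlinarith
    have e1 : coef = (((N : ℝ) - k) - op) / ((N : ℝ) - k) := by
      rw [hcoefdef]
      field_simp
    rw [e1, div_mul_div_comm, div_le_iff₀ (by positivity)]
    nlinarith
  rcases le_or_gt coef 0 with hc | hc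
  · refine le_trans ?_ haS
    have hg := gap_nonneg g βp η A B σA
    nlinarith
  · have hgap : gap N g βp η A B σA ≤ aS / coef := by
      refine Real.sSup_le ?_ (div_nonneg haS hc.le)
      intro r hr
      rw [le_div_iff₀ hc]
      rw [mul_comm]
      exact claim r hr
    calc coef * gap N g βp η A B σA ≤ coef * (aS / coef) :=
        mul_le_mul_of_nonneg_left hgap hc.le
      _ = aS := by
        rw [mul_comm, div_mul_cancel₀ _ hc.ne']
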